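/- Let n₁, n₂, n₃, n₄ be integers with |n_j| ≥ 3 for j = 1,…,4, n₁ + n₂ + n₃ + n₄ = 0, and λ(n₁) + λ(n₂) + λ(n₃) + λ(n₄) = 0. Then (n₁, n₂, n₃, n₄) is totally degenerate, i.e., it is a permutation of (k, −k, l, −l) for some integers k, l. In other words, all 4-wave resonances of λ are totally degenerate. -/

import Mathlib

/-! `λ` is odd and `1 ≤ λ(n) ≤ 8/5` for `n ≥ 3`. If `p` entries of a resonance are positive and
`q` negative, the positive and negative `λ`-sums cancel, so `p ≤ 8q/5` and `q ≤ 8p/5`; with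
`p + q = 4` this forces `p = q = 2`. Writing the positive entries as `a, b` and the negated negative
ones as `c, d`, we get `a + b = c + d` and `1/(a²-4) + 1/(b²-4) = 1/(c²-4) + 1/(d²-4)`. For a fixed
sum this quantity is strictly decreasing in the product, so `ab = cd`, hence `{a, b} = {c, d}`. -/

/-- The dispersion relation λ(n) = sgn(n)·(1 + 3/(n² − 4)) for |n| ≥ 3. -/
noncomputable def lam (n : ℤ) : ℝ :=
  if 3 ≤ |n| then (Int.sign n : ℝ) * (1 + 3 / ((n : ℝ) ^ 2 - 4)) else 0

/-- A 4-tuple is totally degenerate if it is a permutation of (k, −k, l, −l). -/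
def TotallyDegenerate (n₁ n₂ n₃ n₄ : ℤ) : Prop :=
  ∃ k l : ℤ, ({n₁, n₂, n₃, n₄} : Multiset ℤ) = ({k, -k, l, -l} : Multiset ℤ)

lemma one_div_sq_sub_four_add_one_div_sq_sub_four {x y : ℝ} (hx : x ^ 2 - 4 ≠ 0)
    (hy : y ^ 2 - 4 ≠ 0) :
    1 / (x ^ 2 - 4) + 1 / (y ^ 2 - 4) =
      ((x + y) ^ 2 - 2 * (x * y) - 8) / ((x * y) ^ 2 + 8 * (x * y) - 4 * (x + y) ^ 2 + 16) := by
  have hden : (x * y) ^ 2 + 8 * (x * y) - 4 * (x + y) ^ 2 + 16 = (x ^ 2 - 4) * (y ^ 2 - 4) := by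
    ring
  rw [hden, div_add_div _ _ hx hy]
  ring

/-- In terms of the sum and the product, the numerator `x² + y² - 8` decreases and the denominator
`(x² - 4)(y² - 4)` increases with the product. -/
lemma one_div_sq_sub_four_add_lt_of_mul_lt {x y z w : ℝ} (hx : 2 < x) (hy : 2 < y) (hz : 2 < z)
    (hw : 2 < w) (hsum : x + y = z + w) (hmul : x * y < z * w) :
    1 / (z ^ 2 - 4) + 1 / (w ^ 2 - 4) < 1 / (x ^ 2 - 4) + 1 / (y ^ 2 - 4) := by
  have hx4 : 0 < x ^ 2 - 4 := by nlinarith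
  have hy4 : 0 < y ^ 2 - 4 := by nlinarith
  have hz4 : 0 < z ^ 2 - 4 := by nlinarith
  have hw4 : 0 < w ^ 2 - 4 := by nlinarith
  rw [one_div_sq_sub_four_add_one_div_sq_sub_four hx4.ne' hy4.ne',
    one_div_sq_sub_four_add_one_div_sq_sub_four hz4.ne' hw4.ne', hsum]
  have hxy : 0 < x * y := by positivity
  apply div_lt_div₀ <;> nlinarith

theorem eq_and_eq_or_eq_and_eq_of_one_div_sq_sub_four_add_eq {a b c d : ℝ} (ha : 2 < a)
    (hb : 2 < b) (hc : 2 < c) (hd : 2 < d) (hsum : a + b = c + d)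
    (hres : 1 / (a ^ 2 - 4) + 1 / (b ^ 2 - 4) = 1 / (c ^ 2 - 4) + 1 / (d ^ 2 - 4)) :
    (a = c ∧ b = d) ∨ (a = d ∧ b = c) := by
  have hmul : a * b = c * d := by
    rcases lt_trichotomy (a * b) (c * d) with h | h | h
    · exact absurd hres (one_div_sq_sub_four_add_lt_of_mul_lt ha hb hc hd hsum h).ne'
    · exact h
    · exact absurd hres (one_div_sq_sub_four_add_lt_of_mul_lt hc hd ha hb hsum.symm h).ne
  have hroot : (c - a) * (c - b) = 0 := by linear_combination (-c) * hsum + hmul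
  rcases mul_eq_zero.mp hroot with h | h
  · left; constructor <;> linarith
  · right; constructor <;> linarith

lemma lam_of_three_le {n : ℤ} (hn : 3 ≤ n) : lam n = 1 + 3 / ((n : ℝ) ^ 2 - 4) := by
  simp [lam, abs_of_nonneg (by omega : (0 : ℤ) ≤ n), hn, Int.sign_eq_one_of_pos (by omega : 0 < n)]

lemma lam_neg (n : ℤ) : lam (-n) = -lam n := by
  unfold lam
  rw [abs_neg, Int.sign_neg]
  split <;> push_cast <;> ring

lemma lam_mem_Icc {n : ℤ} (hn : 3 ≤ n) : lam n ∈ Set.Icc 1 (8 / 5) := by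
  have h3 : (3 : ℝ) ≤ n := by exact_mod_cast hn
  have h5 : 5 ≤ (n : ℝ) ^ 2 - 4 := by nlinarith
  rw [lam_of_three_le hn, Set.mem_Icc]
  constructor
  · have : 0 ≤ 3 / ((n : ℝ) ^ 2 - 4) := by positivity
    linarith
  · have : 3 / ((n : ℝ) ^ 2 - 4) ≤ 3 / 5 := div_le_div_of_nonneg_left (by norm_num) (by norm_num) h5
    linarith

lemma lam_mem_Icc_of_le_neg_three {n : ℤ} (hn : n ≤ -3) : lam n ∈ Set.Icc (-(8 / 5)) (-1) := by
  have h := lam_mem_Icc (show 3 ≤ -n by omega)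
  rw [lam_neg, Set.mem_Icc] at h
  exact ⟨by linarith [h.2], by linarith [h.1]⟩

theorem eq_and_eq_or_eq_and_eq_of_lam_add_eq {a b c d : ℤ} (ha : 3 ≤ a) (hb : 3 ≤ b) (hc : 3 ≤ c)
    (hd : 3 ≤ d) (hsum : a + b = c + d) (hres : lam a + lam b = lam c + lam d) :
    (a = c ∧ b = d) ∨ (a = d ∧ b = c) := by
  have h2 : ∀ {n : ℤ}, 3 ≤ n → (2 : ℝ) < n := fun hn => by exact_mod_cast (by omega : (2 : ℤ) < _)
  rw [lam_of_three_le ha, lam_of_three_le hb, lam_of_three_le hc, lam_of_three_le hd] at hres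
  exact_mod_cast eq_and_eq_or_eq_and_eq_of_one_div_sq_sub_four_add_eq (h2 ha) (h2 hb) (h2 hc)
    (h2 hd) (by exact_mod_cast hsum) (by simp only [← mul_one_div (3 : ℝ)] at hres; linarith)

lemma sum_map_lam_mem_Icc {P : Multiset ℤ} (hP : ∀ n ∈ P, 3 ≤ n) :
    (P.map lam).sum ∈ Set.Icc (Multiset.card P : ℝ) (Multiset.card P * (8 / 5)) := by
  constructor
  · simpa using Multiset.card_nsmul_le_sum (s := P.map lam) (a := 1)
      (by simpa using fun n hn => (lam_mem_Icc (hP n hn)).1)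
  · simpa using Multiset.sum_le_card_nsmul (P.map lam) (8 / 5)
      (by simpa using fun n hn => (lam_mem_Icc (hP n hn)).2)

lemma sum_map_lam_mem_Icc_of_le_neg_three {N : Multiset ℤ} (hN : ∀ n ∈ N, n ≤ -3) :
    (N.map lam).sum ∈ Set.Icc ((Multiset.card N : ℝ) * (-(8 / 5))) (Multiset.card N * (-1)) := by
  constructor
  · simpa using Multiset.card_nsmul_le_sum (s := N.map lam) (a := -(8 / 5))
      (by simpa using fun n hn => (lam_mem_Icc_of_le_neg_three (hN n hn)).1)
  · simpa using Multiset.sum_le_card_nsmul (N.map lam) (-1)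
      (by simpa using fun n hn => (lam_mem_Icc_of_le_neg_three (hN n hn)).2)

lemma card_eq_two_of_sum_map_lam_add_eq_zero {P N : Multiset ℤ} (hP : ∀ n ∈ P, 3 ≤ n)
    (hN : ∀ n ∈ N, n ≤ -3) (hcard : Multiset.card P + Multiset.card N = 4)
    (hres : (P.map lam).sum + (N.map lam).sum = 0) :
    Multiset.card P = 2 ∧ Multiset.card N = 2 := by
  obtain ⟨hPlo, hPhi⟩ := sum_map_lam_mem_Icc hP
  obtain ⟨hNlo, hNhi⟩ := sum_map_lam_mem_Icc_of_le_neg_three hN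
  have h1 : (5 * Multiset.card P : ℝ) ≤ 8 * Multiset.card N := by linarith
  have h2 : (5 * Multiset.card N : ℝ) ≤ 8 * Multiset.card P := by linarith
  norm_cast at h1 h2
  omega

lemma exists_eq_of_card_eq_two {P N : Multiset ℤ} (hP : ∀ n ∈ P, 3 ≤ n) (hN : ∀ n ∈ N, n ≤ -3)
    (hcardP : Multiset.card P = 2) (hcardN : Multiset.card N = 2) (hsum : P.sum + N.sum = 0)
    (hres : (P.map lam).sum + (N.map lam).sum = 0) :
    ∃ k l : ℤ, P + N = {k, -k, l, -l} := by
  obtain ⟨a, b, rfl⟩ := Multiset.card_eq_two.mp hcardP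
  obtain ⟨x, y, rfl⟩ := Multiset.card_eq_two.mp hcardN
  simp only [Multiset.insert_eq_cons, Multiset.mem_cons, Multiset.mem_singleton, forall_eq_or_imp,
    forall_eq] at hP hN
  simp only [Multiset.insert_eq_cons, Multiset.map_cons, Multiset.map_singleton, Multiset.sum_cons,
    Multiset.sum_singleton] at hsum hres
  have hres' : lam a + lam b = lam (-x) + lam (-y) := by
    rw [lam_neg, lam_neg]
    linarith
  refine ⟨a, b, ?_⟩
  rcases eq_and_eq_or_eq_and_eq_of_lam_add_eq hP.1 hP.2 (by omega) (by omega) (by omega) hres' with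
    ⟨hx, hy⟩ | ⟨hy, hx⟩
  · rw [show x = -a by omega, show y = -b by omega]
    simp only [Multiset.insert_eq_cons, ← Multiset.singleton_add]
    abel
  · rw [show x = -b by omega, show y = -a by omega]
    simp only [Multiset.insert_eq_cons, ← Multiset.singleton_add]
    abel

theorem exists_eq_of_sum_map_lam_eq_zero {s : Multiset ℤ} (hcard : Multiset.card s = 4)
    (habs : ∀ n ∈ s, 3 ≤ |n|) (hsum : s.sum = 0) (hres : (s.map lam).sum = 0) :
    ∃ k l : ℤ, s = {k, -k, l, -l} := by
  have hP : ∀ n ∈ s.filter (0 < ·), 3 ≤ n := fun n hn => by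
    obtain ⟨hmem, hpos⟩ := Multiset.mem_filter.mp hn
    simpa [abs_of_pos hpos] using habs n hmem
  have hN : ∀ n ∈ s.filter (¬ 0 < ·), n ≤ -3 := fun n hn => by
    obtain ⟨hmem, hnonpos⟩ := Multiset.mem_filter.mp hn
    have := habs n hmem
    rw [abs_of_nonpos (not_lt.mp hnonpos)] at this
    omega
  rw [← Multiset.filter_add_not (0 < ·) s] at hcard hsum hres ⊢
  rw [Multiset.card_add] at hcard
  rw [Multiset.sum_add] at hsum
  rw [Multiset.map_add, Multiset.sum_add] at hres
  obtain ⟨hcardP, hcardN⟩ := card_eq_two_of_sum_map_lam_add_eq_zero hP hN hcard hres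
  exact exists_eq_of_card_eq_two hP hN hcardP hcardN hsum hres

/-- All 4-wave resonances of λ are totally degenerate. -/
theorem stmt7 (n₁ n₂ n₃ n₄ : ℤ) (h1 : 3 ≤ |n₁|) (h2 : 3 ≤ |n₂|) (h3 : 3 ≤ |n₃|)
    (h4 : 3 ≤ |n₄|) (hsum : n₁ + n₂ + n₃ + n₄ = 0)
    (hres : lam n₁ + lam n₂ + lam n₃ + lam n₄ = 0) :
    TotallyDegenerate n₁ n₂ n₃ n₄ := by
  refine exists_eq_of_sum_map_lam_eq_zero rfl ?_ ?_ ?_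
  · simp only [Multiset.insert_eq_cons, Multiset.mem_cons, Multiset.mem_singleton]
    rintro n (rfl | rfl | rfl | rfl) <;> assumption
  · simp only [Multiset.insert_eq_cons, Multiset.sum_cons, Multiset.sum_singleton]
    linarith
  · simp only [Multiset.insert_eq_cons, Multiset.map_cons, Multiset.map_singleton,
      Multiset.sum_cons, Multiset.sum_singleton]
    linarith
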